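/- arXiv:2012.04904 — 2 statements merged into one kernel-verified Lean document; each statement's English description precedes it below -/
import Mathlib

section
/- Assume s divides m and m/s is even. Then the number of elements β ∈ F_q for which the equation X^{p^{2l}} + X = −β^{p^l} has a solution X ∈ F_q equals p^{e-2s}. -/
/-!
Put `L X = X ^ p ^ (2l) + X`, an additive endomorphism of `𝔽_q`. Since `β ↦ -β ^ p ^ l` is a
bijection, the count is `|im L| = q / |ker L|`. Let `s = gcd l e`, so that `4s ∣ e`. The map
`φ = Frob ^ (2s)` has period `e / (2s)`, which is even and coprime to `l / s`; as `φ` commutes with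
negation and `φ x = -x` makes `x` a 2-periodic point, `φ ^ (l/s) x = -x ↔ φ x = -x`. Hence `ker L`
is the set of roots of `X ^ p ^ (2s) + X`, which divides `X ^ p ^ (4s) - X ∣ X ^ q - X` and so has
exactly `p ^ (2s)` roots in `𝔽_q`.
-/

open Finset Polynomial
open scoped Classical

section Iterate

variable {G : Type*} [InvolutiveNeg G] {f : G → G}

theorem iterate_apply_eq_neg_of_odd (hf : Function.Commute f Neg.neg) {x : G} (hx : f x = -x)
    {k : ℕ} (hk : Odd k) : f^[k] x = -x := by
  have hper : Function.IsPeriodicPt f 2 x := by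
    change f (f x) = x
    rw [hx, hf.eq, hx, neg_neg]
  rw [← hper.iterate_mod_apply, Nat.odd_iff.mp hk, Function.iterate_one, hx]

theorem iterate_apply_eq_neg_iff_of_coprime (hf : Function.Commute f Neg.neg) {n u : ℕ}
    (hper : ∀ x, Function.IsPeriodicPt f n x) (hn : Even n) (hu : u.Coprime n) (x : G) :
    f^[u] x = -x ↔ f x = -x := by
  rcases eq_or_ne n 0 with rfl | hn0
  · rw [(Nat.coprime_zero_right u).mp hu, Function.iterate_one]
  have hu_odd : Odd u := (hu.coprime_dvd_right hn.two_dvd).odd_of_right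
  refine ⟨fun h => ?_, fun h => iterate_apply_eq_neg_of_odd hf h hu_odd⟩
  obtain ⟨v, -, hv⟩ := Nat.exists_mul_mod_eq_one_of_coprime hu (by obtain ⟨r, rfl⟩ := hn; omega)
  have hv_odd : Odd v :=
    (Nat.odd_mul.mp (Nat.odd_iff.mpr (by rw [← Nat.mod_mod_of_dvd _ hn.two_dvd, hv]; rfl))).2
  calc f x = f^[u * v] x := by rw [← (hper x).iterate_mod_apply, hv, Function.iterate_one]
    _ = -x := by
      rw [Function.iterate_mul]
      exact iterate_apply_eq_neg_of_odd (hf.iterate_left u) h hv_odd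

end Iterate

theorem card_filter_comp_equiv {α β : Type*} [Fintype α] [Fintype β] (σ : α ≃ β)
    (P : β → Prop) [DecidablePred P] : #{a | P (σ a)} = #{b | P b} := by
  simp only [← Fintype.card_subtype]
  exact Fintype.card_congr (σ.subtypeEquiv fun _ => Iff.rfl)

theorem card_filter_exists_apply_eq_mul_card_filter_apply_eq_zero {G : Type*} [AddGroup G]
    [Fintype G] (f : G →+ G) : #{y | ∃ x, f x = y} * #{x | f x = 0} = Fintype.card G := by
  have hrange : #{y | ∃ x, f x = y} = Nat.card f.range := by
    rw [← Fintype.card_subtype, ← Nat.card_eq_fintype_card]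
    exact Nat.card_congr (Equiv.subtypeEquivRight fun _ => f.mem_range.symm)
  have hker : #{x | f x = 0} = Nat.card f.ker := by
    rw [← Fintype.card_subtype, ← Nat.card_eq_fintype_card]
    exact Nat.card_congr (Equiv.subtypeEquivRight fun _ => f.mem_ker.symm)
  rw [hrange, hker, mul_comm, ← AddSubgroup.index_ker, AddSubgroup.card_mul_index,
    Nat.card_eq_fintype_card]

theorem ne_zero_of_card_eq_pow {α : Type*} [Fintype α] [Nontrivial α] {p e : ℕ}
    (hcard : Fintype.card α = p ^ e) : e ≠ 0 := by
  rintro rfl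
  exact (Fintype.one_lt_card (α := α)).ne' hcard

section FiniteField

variable {K : Type*} [Field K] [Fintype K]

theorem card_filter_isRoot_of_dvd_X_pow_card_sub_X {g : K[X]}
    (hg : g ∣ X ^ Fintype.card K - X) : #{x | g.IsRoot x} = g.natDegree := by
  have hf0 := FiniteField.X_pow_card_sub_X_ne_zero K (Fintype.one_lt_card (α := K))
  have hsplit : (X ^ Fintype.card K - X : K[X]).Splits := by
    rw [splits_iff_card_roots, FiniteField.roots_X_pow_card_sub_X,
      FiniteField.X_pow_card_sub_X_natDegree_eq K Fintype.one_lt_card]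
    rfl
  have hnodup : g.roots.Nodup := Multiset.nodup_of_le (roots.le_of_dvd hf0 hg)
    (FiniteField.roots_X_pow_card_sub_X K ▸ univ.nodup)
  calc #{x | g.IsRoot x} = g.roots.toFinset.card := by
        congr 1; ext x; simp [mem_roots (ne_zero_of_dvd_ne_zero hf0 hg)]
    _ = g.natDegree := by
      rw [Multiset.toFinset_card_of_nodup hnodup, (hsplit.of_dvd hf0 hg).natDegree_eq_card_roots]

variable {p : ℕ} [Fact p.Prime] [CharP K p] {e : ℕ}

theorem card_filter_pow_pow_add_eq_zero (hcard : Fintype.card K = p ^ e) {a : ℕ} (ha : 0 < a)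
    (hae : 2 * a ∣ e) : #{x : K | x ^ p ^ a + x = 0} = p ^ a := by
  set g : K[X] := X ^ p ^ a + X
  have hdeg : g.natDegree = p ^ a := by
    rw [natDegree_add_eq_left_of_natDegree_lt] <;>
      simp [Nat.one_lt_pow ha.ne' (Fact.out : p.Prime).one_lt]
  have hdvd : g ∣ X ^ p ^ (2 * a) - X := by
    have : (X ^ p ^ (2 * a) - X : K[X]) = g ^ p ^ a - g := by
      rw [add_pow_char_pow, ← pow_mul, ← pow_add, two_mul]; ring
    rw [this]
    exact dvd_sub (dvd_pow_self g (pow_ne_zero _ (Fact.out : p.Prime).ne_zero)) dvd_rfl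
  calc #{x : K | x ^ p ^ a + x = 0} = #{x | g.IsRoot x} := by
        congr 1; ext x; simp [g]
    _ = p ^ a := by
      rw [card_filter_isRoot_of_dvd_X_pow_card_sub_X
        (hcard ▸ hdvd.trans (dvd_pow_pow_sub_self_of_dvd hae)), hdeg]

theorem pow_pow_two_mul_add_eq_zero_iff_gcd (hcard : Fintype.card K = p ^ e) {l : ℕ}
    (h4 : 4 * l.gcd e ∣ e) (x : K) :
    x ^ p ^ (2 * l) + x = 0 ↔ x ^ p ^ (2 * l.gcd e) + x = 0 := by
  set s := l.gcd e
  have hs0 : 0 < s := Nat.gcd_pos_of_pos_right l (Nat.pos_of_ne_zero (ne_zero_of_card_eq_pow hcard))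
  obtain ⟨t, ht⟩ := h4
  set φ : K → K := ⇑(iterateFrobenius K p (2 * s))
  have hφ (k : ℕ) (y : K) : φ^[k] y = y ^ p ^ (2 * s * k) := by
    rw [← coe_iterateFrobenius_mul, iterateFrobenius_def]
  have hper (y : K) : Function.IsPeriodicPt φ (2 * t) y := by
    rw [Function.IsPeriodicPt, Function.IsFixedPt, hφ, show 2 * s * (2 * t) = e by rw [ht]; ring,
      ← hcard, FiniteField.pow_card]
  have hu : (l / s).Coprime (2 * t) := by
    have hes : e / s = 2 * t * 2 := by
      rw [ht, show 4 * s * t = s * (2 * t * 2) by ring, Nat.mul_div_cancel_left _ hs0]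
    exact (hes ▸ Nat.coprime_div_gcd_div_gcd hs0).coprime_dvd_right (dvd_mul_right _ _)
  have hl : 2 * l = 2 * s * (l / s) := by
    rw [mul_assoc, Nat.mul_div_cancel' (Nat.gcd_dvd_left l e)]
  rw [add_eq_zero_iff_eq_neg, add_eq_zero_iff_eq_neg, hl, ← hφ, ← mul_one (2 * s), ← hφ,
    Function.iterate_one]
  exact iterate_apply_eq_neg_iff_of_coprime (fun y => map_neg _ y) hper (even_two_mul t) hu x

theorem card_filter_exists_pow_pow_add_eq_neg_pow_pow (hcard : Fintype.card K = p ^ e) {l : ℕ}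
    (h4 : 4 * l.gcd e ∣ e) :
    #{β : K | ∃ X, X ^ p ^ (2 * l) + X = -β ^ p ^ l} = p ^ (e - 2 * l.gcd e) := by
  set s := l.gcd e
  have he0 : 0 < e := Nat.pos_of_ne_zero (ne_zero_of_card_eq_pow hcard)
  have hse : 2 * s ≤ e := by have := Nat.le_of_dvd he0 h4; omega
  let L : K →+ K := (iterateFrobenius K p (2 * l)).toAddMonoidHom + AddMonoidHom.id K
  let σ : K ≃ K := (iterateFrobeniusEquiv K p l).toEquiv.trans (Equiv.neg K)
  have hker : #{x | L x = 0} = p ^ (2 * s) := by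
    rw [← card_filter_pow_pow_add_eq_zero hcard (by positivity) (by rwa [← mul_assoc])]
    exact congrArg card (filter_congr fun x _ => pow_pow_two_mul_add_eq_zero_iff_gcd hcard h4 x)
  have hrank := card_filter_exists_apply_eq_mul_card_filter_apply_eq_zero L
  rw [hker, hcard, ← Nat.sub_add_cancel hse, pow_add] at hrank
  change #{β | ∃ X, L X = σ β} = _
  exact (card_filter_comp_equiv σ _).trans
    (Nat.eq_of_mul_eq_mul_right (pow_pos (Fact.out : p.Prime).pos _) hrank)

end FiniteField

theorem card_solvable_betas_general
    (p : ℕ) [Fact p.Prime] (l m e s : ℕ)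
    (hm : 1 ≤ m) (he : e = 2 * m) (hs : s = Nat.gcd l e)
    (hsm : s ∣ m) (heven : Even (m / s)) :
    letI : Fintype (GaloisField p e) := Fintype.ofFinite _
    (Finset.univ.filter (fun β : GaloisField p e =>
        ∃ X : GaloisField p e, X ^ (p ^ (2 * l)) + X = -β ^ (p ^ l))).card
      = p ^ (e - 2 * s) := by
  let _ : Fintype (GaloisField p e) := Fintype.ofFinite _
  have hcard : Fintype.card (GaloisField p e) = p ^ e := by
    rw [← Nat.card_eq_fintype_card]
    exact GaloisField.card p e (by omega)
  have h4 : 4 * s ∣ e := by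
    obtain ⟨t, ht⟩ := heven
    rw [he, ← Nat.mul_div_cancel' hsm, ht]
    exact ⟨t, by ring⟩
  subst hs
  exact card_filter_exists_pow_pow_add_eq_neg_pow_pow hcard h4

/-- Lemma 3.6: if `m/s` is even, then the number of `β ∈ F_q` such that the equation
`X^{p^{2l}} + X = -β^{p^l}` is solvable in `F_q` equals `p^{e-2s}`. -/
theorem card_solvable_betas
    (p : ℕ) [Fact p.Prime] (hp : Odd p) (l m e s : ℕ)
    (hl : 0 < l) (hm : 1 ≤ m) (he : e = 2 * m) (hs : s = Nat.gcd l e)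
    (hsm : s ∣ m) (heven : Even (m / s)) :
    letI : Fintype (GaloisField p e) := Fintype.ofFinite _
    (Finset.univ.filter (fun β : GaloisField p e =>
        ∃ X : GaloisField p e, X ^ (p ^ (2 * l)) + X = -β ^ (p ^ l))).card
      = p ^ (e - 2 * s) :=
  card_solvable_betas_general p l m e s hm he hs hsm heven
end

section
/- Assume s divides m and m/s is odd. Then for every a ∈ F_q with a ≠ 0, the map X ↦ X^{p^{2l}} + X is a bijection of F_q; in particular the equation X^{p^{2l}} + X = −a^{p^l} has a unique solution in F_q. -/
/-- If `m/s` is odd, then `X ↦ X^{p^{2l}} + X` is a bijection of `F_q` (a permutation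
polynomial), and in particular for every `a ≠ 0` the equation `X^{p^{2l}} + X = -a^{p^l}`
has a unique solution in `F_q`. -/
theorem bijective_add_pow_of_odd_case
    (p : ℕ) [Fact p.Prime] (hp : Odd p) (l m e s : ℕ)
    (hl : 0 < l) (hm : 1 ≤ m) (he : e = 2 * m) (hs : s = Nat.gcd l e)
    (hsm : s ∣ m) (hodd : Odd (m / s)) :
    ∀ a : GaloisField p e, a ≠ 0 →
      Function.Bijective (fun X : GaloisField p e => X ^ (p ^ (2 * l)) + X) ∧
      ∃! X : GaloisField p e, X ^ (p ^ (2 * l)) + X = -a ^ (p ^ l) := by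
  have he0 : e ≠ 0 := by omega
  haveI : Fintype (GaloisField p e) := Fintype.ofFinite _
  have hcard : Fintype.card (GaloisField p e) = p ^ e := by
    rw [← Nat.card_eq_fintype_card]; exact GaloisField.card p e he0
  have hsl : s ∣ l := hs ▸ Nat.gcd_dvd_left l e
  have hs0 : 0 < s := by
    rw [hs]; exact Nat.gcd_pos_of_pos_left e hl
  -- kernel triviality
  have hker : ∀ X : GaloisField p e, X ^ (p ^ (2 * l)) + X = 0 → X = 0 := by
    intro X hX
    have hXeq : X ^ (p ^ (2 * l)) = -X := by linear_combination hX
    have podd : Odd (p ^ (2 * l)) := hp.pow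
    have key : ∀ k : ℕ, X ^ (p ^ (2 * l * k)) = (-1 : GaloisField p e) ^ k * X := by
      intro k
      induction k with
      | zero => simp
      | succ k ih =>
        have h1 : 2 * l * (k + 1) = 2 * l * k + 2 * l := by ring
        rw [h1, pow_add, pow_mul, ih, mul_pow, hXeq, ← pow_mul,
          mul_comm k (p ^ (2 * l)), pow_mul, podd.neg_one_pow]
        ring
    set k := m / s with hk
    obtain ⟨l', hl'⟩ := hsl
    have hmk : m = s * k := by rw [hk, Nat.mul_div_cancel' hsm]
    have hdvd : 2 * l * k = e * l' := by rw [he, hmk, hl']; ring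
    have hX2 : X ^ (p ^ (2 * l * k)) = X := by
      rw [hdvd, pow_mul, ← hcard]
      exact FiniteField.pow_card_pow l' X
    rw [key k, hodd.neg_one_pow] at hX2
    have h2 : (2 : GaloisField p e) ≠ 0 := by
      have hp2 : p ≠ 2 := by
        intro h; rw [h] at hp; exact (by decide : ¬ Odd 2) hp
      have : ((2 : ℕ) : GaloisField p e) ≠ 0 := by
        rw [Ne, CharP.cast_eq_zero_iff (GaloisField p e) p]
        intro h
        exact hp2 ((Nat.prime_dvd_prime_iff_eq Fact.out Nat.prime_two).mp h)
      simpa using this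
    have hz : (2 : GaloisField p e) * X = 0 := by linear_combination -hX2
    rcases mul_eq_zero.mp hz with h | h
    · exact absurd h h2
    · exact h
  have hinj : Function.Injective (fun X : GaloisField p e => X ^ (p ^ (2 * l)) + X) := by
    intro X Y hXY
    simp only at hXY
    have hsub : (X - Y) ^ (p ^ (2 * l)) + (X - Y) = 0 := by
      rw [sub_pow_char_pow]
      linear_combination hXY
    exact sub_eq_zero.mp (hker _ hsub)
  have hbij : Function.Bijective (fun X : GaloisField p e => X ^ (p ^ (2 * l)) + X) :=
    Finite.injective_iff_bijective.mp hinj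
  intro a ha
  exact ⟨hbij, hbij.existsUnique _⟩
end
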